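/- arXiv:1206.3541 — 4 statements merged into one kernel-verified Lean document; each statement's English description precedes it below -/
import Mathlib

section
/- Let R : [0,1] → ℝ be concave and twice continuously differentiable, and let X, Y : [0,1] → ℝ be continuously differentiable functions with X(0) = Y(0) = 0, X(1) = Y(1), X(q) ≤ Y(q) for all q, and ∫₀¹ x(q) R'(q) dq = ∫₀¹ y(q) R'(q) dq, where x = X' and y = Y'. Then for every q ∈ [0,1], either R''(q) = 0 or X(q) = Y(q). -/
/-!
Integrating by parts (the boundary terms vanish since `X` and `Y` agree at `0` and `1`), the
hypothesis says `∫₀¹ (Y - X) R'' = 0`. Concavity gives `R'' ≤ 0`, so `(Y - X) (-R'')` is a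
continuous nonnegative function with zero integral, hence vanishes on `[0, 1]`.
-/

open Set MeasureTheory intervalIntegral

lemma ConcaveOn.deriv_deriv_nonpos {f : ℝ → ℝ} {a b x : ℝ} (hab : a < b)
    (hf : ConcaveOn ℝ (Icc a b) f) (hfd : Differentiable ℝ f)
    (hf' : DifferentiableAt ℝ (deriv f) x) (hx : x ∈ Icc a b) :
    deriv (deriv f) x ≤ 0 :=
  hf'.hasDerivAt.hasDerivWithinAt.nonpos_of_antitoneOn (uniqueDiffOn_Icc hab x hx).accPt
    (hf.antitoneOn_deriv fun y _ ↦ hfd y)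

lemma eqOn_zero_of_integral_eq_zero_of_nonneg {f : ℝ → ℝ} {a b : ℝ} (hab : a < b)
    (hf : ContinuousOn f (Icc a b)) (hnonneg : ∀ x ∈ Icc a b, 0 ≤ f x)
    (hint : ∫ x in a..b, f x = 0) : EqOn f 0 (Icc a b) := by
  have hae : f =ᵐ[volume.restrict (Ioc a b)] 0 :=
    (integral_eq_zero_iff_of_le_of_nonneg_ae hab.le
      ((ae_restrict_iff' measurableSet_Ioc).mpr
        (.of_forall fun x hx ↦ hnonneg x (Ioc_subset_Icc_self hx)))
      (hf.intervalIntegrable_of_Icc hab.le)).mp hint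
  rw [Measure.restrict_congr_set Ioc_ae_eq_Icc] at hae
  exact Measure.eqOn_Icc_of_ae_eq volume hab.ne hae hf continuousOn_const

lemma integral_mul_deriv_eq_neg_integral_deriv_mul {u v : ℝ → ℝ} {a b : ℝ}
    (hu : ContDiff ℝ 1 u) (hv : ContDiff ℝ 1 v) (hua : u a = 0) (hub : u b = 0) :
    ∫ x in a..b, u x * deriv v x = -∫ x in a..b, deriv u x * v x := by
  rw [integral_mul_deriv_eq_deriv_mul (fun x _ ↦ (hu.differentiable one_ne_zero x).hasDerivAt)
    (fun x _ ↦ (hv.differentiable one_ne_zero x).hasDerivAt)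
    ((hu.continuous_deriv le_rfl).intervalIntegrable a b)
    ((hv.continuous_deriv le_rfl).intervalIntegrable a b), hua, hub]
  ring

theorem stmt_2 (R X Y : ℝ → ℝ)
    (hR : ContDiff ℝ 2 R) (hRconc : ConcaveOn ℝ (Set.Icc 0 1) R)
    (hX : ContDiff ℝ 1 X) (hY : ContDiff ℝ 1 Y)
    (hX0 : X 0 = 0) (hY0 : Y 0 = 0) (h1 : X 1 = Y 1)
    (hle : ∀ q ∈ Set.Icc (0:ℝ) 1, X q ≤ Y q)
    (hint : ∫ q in (0:ℝ)..1, deriv X q * deriv R q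
          = ∫ q in (0:ℝ)..1, deriv Y q * deriv R q) :
    ∀ q ∈ Set.Icc (0:ℝ) 1, deriv (deriv R) q = 0 ∨ X q = Y q := by
  have hR' : ContDiff ℝ 1 (deriv R) := hR.deriv'
  have hR''_nonpos (q : ℝ) (hq : q ∈ Icc (0:ℝ) 1) : deriv (deriv R) q ≤ 0 :=
    hRconc.deriv_deriv_nonpos zero_lt_one (hR.differentiable two_ne_zero)
      (hR'.differentiable one_ne_zero q) hq
  have hparts : ∫ q in (0:ℝ)..1, (Y q - X q) * deriv (deriv R) q = 0 := by
    rw [integral_mul_deriv_eq_neg_integral_deriv_mul (hY.sub hX) hR' (by simp [hX0, hY0])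
      (by simp [h1])]
    have hD' : deriv (fun q ↦ Y q - X q) = fun q ↦ deriv Y q - deriv X q :=
      funext fun q ↦
        deriv_fun_sub (hY.differentiable one_ne_zero q) (hX.differentiable one_ne_zero q)
    simp only [hD', sub_mul]
    rw [integral_sub (f := fun q ↦ deriv Y q * deriv R q) (g := fun q ↦ deriv X q * deriv R q)
      (((hY.continuous_deriv le_rfl).mul hR'.continuous).intervalIntegrable _ _)
      (((hX.continuous_deriv le_rfl).mul hR'.continuous).intervalIntegrable _ _), hint, sub_self,
      neg_zero]
  have hzero := eqOn_zero_of_integral_eq_zero_of_nonneg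
    (f := fun q ↦ (Y q - X q) * -deriv (deriv R) q) zero_lt_one
    (((hY.continuous.sub hX.continuous).mul (hR'.continuous_deriv le_rfl).neg).continuousOn)
    (fun q hq ↦ mul_nonneg (sub_nonneg.mpr (hle q hq)) (neg_nonneg.mpr (hR''_nonpos q hq)))
    (by simp [mul_neg, intervalIntegral.integral_neg, hparts])
  intro q hq
  rcases mul_eq_zero.mp (hzero hq) with h | h
  · exact .inr (sub_eq_zero.mp h).symm
  · exact .inl (neg_eq_zero.mp h)
end

section
/- Let x, y : [0,1] → [0,1] be non-increasing step functions with finitely many pieces, with cumulative functions X(q) = ∫₀^q x and Y(q) = ∫₀^q y satisfying X(q) ≤ Y(q) for all q and X(1) = Y(1). Then there exists a finite sequence of interval-resampling operations (each replacing y on an interval [a,b] by its average value on [a,b]) transforming y into x; moreover at most m operations suffice when x and y together have at most m pieces. -/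
/-!
Induct on the pieces of `x`. If `x = v` on its first piece `(a, b)`, then `Y(t) - v (t - a)`
is `≥ 0` at `b` by dominance and `≤ 0` at the right end, because `x ≤ v` beyond `a` keeps `X`
below the line `v (t - a)`; so it vanishes at some `c ≥ b`. Averaging `y` over `[a, c]` makes
it equal to `v` there, replaces `Y` on `[a, c]` by that line (still above `X`) and leaves `Y`
unchanged beyond `c`. Hence the new function agrees with `x` on the first piece and still
dominates `x` on `[b, 1]`, where the remaining pieces are handled recursively.
-/

open MeasureTheory

/-- Interval resampling: replace `f` on `[a,b]` by its average value there. -/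
noncomputable def resample (f : ℝ → ℝ) (p : ℝ × ℝ) : ℝ → ℝ :=
  fun t => if t ∈ Set.Icc p.1 p.2 then (∫ s in p.1..p.2, f s) / (p.2 - p.1) else f t

open Set intervalIntegral

section Resample

variable {y : ℝ → ℝ} {a c t : ℝ}

lemma resample_of_mem (ht : t ∈ Icc a c) :
    resample y (a, c) t = (∫ s in a..c, y s) / (c - a) :=
  if_pos ht

lemma resample_of_notMem (ht : t ∉ Icc a c) : resample y (a, c) t = y t :=
  if_neg ht

lemma foldl_resample_of_lt {b : ℝ} (L : List (ℝ × ℝ)) (hL : ∀ p ∈ L, b ≤ p.1)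
    (f : ℝ → ℝ) (ht : t < b) : L.foldl resample f t = f t := by
  induction L generalizing f with
  | nil => rfl
  | cons p L ih =>
    rw [List.foldl_cons, ih (fun p hp => hL p (List.mem_cons_of_mem _ hp))]
    exact if_neg fun h => (hL p List.mem_cons_self).not_gt (h.1.trans_lt ht)

lemma IntegrableOn.resample {s : Set ℝ} (hy : IntegrableOn y s) (p : ℝ × ℝ) :
    IntegrableOn (resample y p) s := by
  have hconst : IntegrableOn (fun _ => (∫ s in p.1..p.2, y s) / (p.2 - p.1)) (Icc p.1 p.2) :=
    integrableOn_const measure_Icc_lt_top.ne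
  exact Integrable.piecewise measurableSet_Icc hconst.restrict hy.integrableOn

lemma IntervalIntegrable.resample (hy : IntervalIntegrable y volume a t) (p : ℝ × ℝ) :
    IntervalIntegrable (resample y p) volume a t :=
  ⟨IntegrableOn.resample hy.1 p, IntegrableOn.resample hy.2 p⟩

lemma integral_resample_of_le (hac : a < c) (hct : c ≤ t)
    (hy : IntervalIntegrable y volume a t) :
    ∫ s in a..t, resample y (a, c) s = ∫ s in a..t, y s := by
  have hsub : uIcc a c ⊆ uIcc a t ∧ uIcc c t ⊆ uIcc a t :=
    ⟨uIcc_subset_uIcc_left (mem_uIcc_of_le hac.le hct),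
      uIcc_subset_uIcc_right (mem_uIcc_of_le hac.le hct)⟩
  have hy' := hy.resample (a, c)
  rw [← integral_add_adjacent_intervals (hy'.mono_set hsub.1) (hy'.mono_set hsub.2),
    ← integral_add_adjacent_intervals (hy.mono_set hsub.1) (hy.mono_set hsub.2)]
  congr 1
  · rw [integral_congr fun s hs => resample_of_mem (uIcc_of_le hac.le ▸ hs),
      intervalIntegral.integral_const, smul_eq_mul, mul_div_cancel₀ _ (sub_ne_zero.2 hac.ne')]
  · refine integral_congr_ae (Filter.Eventually.of_forall fun s hs => resample_of_notMem ?_)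
    rw [uIoc_of_le hct] at hs
    exact fun h => h.2.not_gt hs.1

end Resample

lemma exists_integral_eq_mul_sub {y : ℝ → ℝ} {a b e v : ℝ}
    (hy : IntervalIntegrable y volume a e) (hab : a ≤ b) (hbe : b ≤ e)
    (hb : v * (b - a) ≤ ∫ s in a..b, y s)
    (he : ∫ s in a..e, y s ≤ v * (e - a)) :
    ∃ c ∈ Icc b e, ∫ s in a..c, y s = v * (c - a) := by
  have hY : ContinuousOn (fun t => ∫ s in a..t, y s) (Icc a e) := by
    simpa only [uIcc_of_le (hab.trans hbe)] using
      continuousOn_primitive_interval' hy left_mem_uIcc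
  have hg : ContinuousOn (fun t => (∫ s in a..t, y s) - v * (t - a)) (Icc b e) :=
    (hY.mono (Icc_subset_Icc_left hab)).sub (by fun_prop)
  obtain ⟨c, hc, hc0⟩ :=
    intermediate_value_Icc' hbe hg (show (0 : ℝ) ∈ _ from ⟨by linarith, by linarith⟩)
  exact ⟨c, hc, sub_eq_zero.1 hc0⟩

section FirstPiece

variable {x : ℝ → ℝ} {a b e v : ℝ}

lemma integral_eq_of_eqOn_Ioo (hab : a ≤ b) (h : EqOn x (fun _ => v) (Ioo a b)) :
    ∫ s in a..b, x s = v * (b - a) := by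
  rw [integral_congr_Ioo_of_le hab h, intervalIntegral.integral_const, smul_eq_mul, mul_comm]

lemma AntitoneOn.le_of_eqOn_Ioo (hx : AntitoneOn x (Icc a e)) (hab : a < b)
    (h : EqOn x (fun _ => v) (Ioo a b)) {t : ℝ} (ht : t ∈ Ioc a e) : x t ≤ v := by
  obtain ⟨u, hau, hut⟩ := exists_between (lt_min ht.1 hab)
  calc x t ≤ x u := hx ⟨hau.le, (hut.le.trans (min_le_left _ _)).trans ht.2⟩
        (Ioc_subset_Icc_self ht) (hut.le.trans (min_le_left _ _))
    _ = v := h ⟨hau, hut.trans_le (min_le_right _ _)⟩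

lemma AntitoneOn.integral_le_of_eqOn_Ioo (hx : AntitoneOn x (Icc a e)) (hab : a < b)
    (h : EqOn x (fun _ => v) (Ioo a b)) {t : ℝ} (ht : t ∈ Icc a e) :
    ∫ s in a..t, x s ≤ v * (t - a) := by
  have hxt : IntervalIntegrable x volume a t :=
    (hx.mono (uIcc_subset_Icc ⟨le_rfl, ht.1.trans ht.2⟩ ht)).intervalIntegrable
  have := integral_mono_on_of_le_Ioo ht.1 hxt intervalIntegrable_const
    fun s hs => hx.le_of_eqOn_Ioo hab h ⟨hs.1, hs.2.le.trans ht.2⟩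
  rwa [intervalIntegral.integral_const, smul_eq_mul, mul_comm] at this

end FirstPiece

def Dominated (x y : ℝ → ℝ) (a e : ℝ) : Prop :=
  (∀ t ∈ Icc a e, ∫ s in a..t, x s ≤ ∫ s in a..t, y s) ∧
    ∫ s in a..e, x s = ∫ s in a..e, y s

lemma Dominated.of_integral_le_of_eq {x y : ℝ → ℝ} {a b e : ℝ}
    (hx : IntervalIntegrable x volume a e) (hy : IntervalIntegrable y volume a e)
    (hab : a ≤ b) (hbe : b ≤ e)
    (hle : ∀ t ∈ Icc b e, ∫ s in a..t, x s ≤ ∫ s in a..t, y s)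
    (hb : ∫ s in a..b, x s = ∫ s in a..b, y s) (he : ∫ s in a..e, x s = ∫ s in a..e, y s) :
    Dominated x y b e := by
  have hshift : ∀ f : ℝ → ℝ, IntervalIntegrable f volume a e → ∀ t ∈ Icc b e,
      ∫ s in b..t, f s = (∫ s in a..t, f s) - ∫ s in a..b, f s := fun f hf t ht =>
    (integral_interval_sub_left
      (hf.mono_set (uIcc_subset_uIcc_left (mem_uIcc_of_le (hab.trans ht.1) ht.2)))
      (hf.mono_set (uIcc_subset_uIcc_left (mem_uIcc_of_le hab (ht.1.trans ht.2))))).symm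
  have he' : e ∈ Icc b e := ⟨hbe, le_rfl⟩
  refine ⟨fun t ht => ?_, ?_⟩
  · rw [hshift x hx t ht, hshift y hy t ht, hb]
    exact sub_le_sub_right (hle t ht) _
  · rw [hshift x hx e he', hshift y hy e he', hb, he]

theorem Dominated.exists_resample {x y : ℝ → ℝ} {a b e v : ℝ} (hx : AntitoneOn x (Icc a e))
    (hy : IntervalIntegrable y volume a e) (hab : a < b) (hbe : b ≤ e)
    (hxv : EqOn x (fun _ => v) (Ioo a b)) (h : Dominated x y a e) :
    ∃ c ∈ Icc b e, EqOn (resample y (a, c)) (fun _ => v) (Icc a c) ∧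
      Dominated x (resample y (a, c)) b e := by
  have hae : a ≤ e := hab.le.trans hbe
  have hXb := integral_eq_of_eqOn_Ioo hab.le hxv
  have hXle : ∀ t ∈ Icc a e, ∫ s in a..t, x s ≤ v * (t - a) :=
    fun t ht => hx.integral_le_of_eqOn_Ioo hab hxv ht
  obtain ⟨c, hc, hYc⟩ := exists_integral_eq_mul_sub hy hab.le hbe
    (hXb ▸ h.1 b ⟨hab.le, hbe⟩) (h.2 ▸ hXle e ⟨hae, le_rfl⟩)
  have hac : a < c := hab.trans_le hc.1
  have hy'v : EqOn (resample y (a, c)) (fun _ => v) (Icc a c) := fun t ht => by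
    rw [resample_of_mem ht, hYc, mul_div_cancel_right₀ _ (sub_ne_zero.2 hac.ne')]
  have hY'_le_c : ∀ t ∈ Icc a c, ∫ s in a..t, resample y (a, c) s = v * (t - a) := fun t ht =>
    integral_eq_of_eqOn_Ioo ht.1
      (hy'v.mono (Ioo_subset_Icc_self.trans (Icc_subset_Icc_right ht.2)))
  have hY'_ge_c : ∀ t ∈ Icc c e, ∫ s in a..t, resample y (a, c) s = ∫ s in a..t, y s :=
    fun t ht => integral_resample_of_le hac ht.1
      (hy.mono_set (uIcc_subset_uIcc_left (mem_uIcc_of_le (hac.le.trans ht.1) ht.2)))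
  refine ⟨c, hc, hy'v, Dominated.of_integral_le_of_eq
    (hx.mono (uIcc_subset_Icc (left_mem_Icc.2 hae) (right_mem_Icc.2 hae))).intervalIntegrable
    (hy.resample (a, c)) hab.le hbe (fun t ht => ?_) ?_ ?_⟩
  · rcases le_total t c with htc | hct
    · rw [hY'_le_c t ⟨hab.le.trans ht.1, htc⟩]
      exact hXle t ⟨hab.le.trans ht.1, ht.2⟩
    · rw [hY'_ge_c t ⟨hct, ht.2⟩]
      exact h.1 t ⟨hab.le.trans ht.1, ht.2⟩
  · rw [hXb, hY'_le_c b ⟨hab.le, hc.1⟩]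
  · rw [hY'_ge_c e ⟨hc.2, le_rfl⟩, h.2]

lemma ae_eq_restrict_Icc_of_eqOn_Ioo {f g : ℝ → ℝ} {a b e : ℝ} (hab : a ≤ b) (hbe : b ≤ e)
    (hIoo : EqOn f g (Ioo a b)) (hIcc : f =ᵐ[volume.restrict (Icc b e)] g) :
    f =ᵐ[volume.restrict (Icc a e)] g := by
  rw [← Ico_union_Icc_eq_Icc hab hbe, Filter.EventuallyEq, ae_restrict_union_eq,
    ← Measure.restrict_congr_set Ioo_ae_eq_Ico]
  exact Filter.eventually_sup.2 ⟨(ae_restrict_mem measurableSet_Ioo).mono hIoo, hIcc⟩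

theorem Dominated.exists_resample_list {a e : ℝ} (n : ℕ) (q : Fin (n + 1) → ℝ)
    (x y : ℝ → ℝ) (hq : Monotone q) (hq0 : q 0 = a) (hqn : q (Fin.last n) = e)
    (hx : AntitoneOn x (Icc a e)) (hy : IntervalIntegrable y volume a e)
    (hpiece : ∀ i : Fin n, ∀ s ∈ Ioo (q i.castSucc) (q i.succ),
      ∀ t ∈ Ioo (q i.castSucc) (q i.succ), x s = x t)
    (h : Dominated x y a e) :
    ∃ L : List (ℝ × ℝ), L.length ≤ n ∧ (∀ p ∈ L, a ≤ p.1 ∧ p.1 ≤ p.2 ∧ p.2 ≤ e) ∧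
      L.foldl resample y =ᵐ[volume.restrict (Icc a e)] x := by
  induction n generalizing a y with
  | zero =>
    have hae : a = e := hq0.symm.trans hqn
    refine ⟨[], le_rfl, by simp, ?_⟩
    simp [hae, Measure.restrict_eq_zero.2 (measure_singleton e), Filter.EventuallyEq]
  | succ n ih =>
    have hq' : Monotone (Fin.tail q) := hq.comp Fin.strictMono_succ.monotone
    have hqn' : Fin.tail q (Fin.last n) = e := by simpa [Fin.tail] using hqn
    have hpiece' : ∀ i : Fin n, ∀ s ∈ Ioo (Fin.tail q i.castSucc) (Fin.tail q i.succ),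
        ∀ t ∈ Ioo (Fin.tail q i.castSucc) (Fin.tail q i.succ), x s = x t := by
      intro i
      simpa only [Fin.tail, Fin.succ_castSucc] using hpiece i.succ
    obtain ⟨b, hq0'⟩ : ∃ b, Fin.tail q 0 = b := ⟨_, rfl⟩
    have hab : a ≤ b := hq0 ▸ hq0' ▸ hq (Fin.zero_le _)
    have hbe : b ≤ e := hq0' ▸ hqn' ▸ hq' (Fin.zero_le _)
    rcases hab.eq_or_lt with rfl | hab
    · obtain ⟨L, hL, hLmem, hLae⟩ := ih (Fin.tail q) y hq' hq0' hqn' hx hy hpiece' h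
      exact ⟨L, hL.trans n.le_succ, hLmem, hLae⟩
    obtain ⟨u, hu⟩ := nonempty_Ioo.2 hab
    have hIoo : Ioo (q (Fin.castSucc 0)) (q (Fin.succ 0)) = Ioo a b := by
      rw [← hq0, ← hq0']; rfl
    have hxv : EqOn x (fun _ => x u) (Ioo a b) := fun t ht =>
      hpiece 0 t (hIoo ▸ ht) u (hIoo ▸ hu)
    obtain ⟨c, hc, hy'v, h'⟩ := h.exists_resample hx hy hab hbe hxv
    obtain ⟨L, hL, hLmem, hLae⟩ := ih (Fin.tail q) (resample y (a, c)) hq' hq0' hqn'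
      (hx.mono (Icc_subset_Icc_left hab.le))
      ((hy.resample (a, c)).mono_set (uIcc_subset_uIcc_right (mem_uIcc_of_le hab.le hbe)))
      hpiece' h'
    refine ⟨(a, c) :: L, Nat.succ_le_succ hL, ?_, ?_⟩
    · intro p hp
      rcases List.mem_cons.1 hp with rfl | hp
      · exact ⟨le_rfl, (hab.trans_le hc.1).le, hc.2⟩
      · obtain ⟨hbp, hp12, hp2⟩ := hLmem p hp
        exact ⟨hab.le.trans hbp, hp12, hp2⟩
    refine ae_eq_restrict_Icc_of_eqOn_Ioo hab.le hbe (fun t ht => ?_) hLae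
    rw [List.foldl_cons, foldl_resample_of_lt L (fun p hp => (hLmem p hp).1) _ ht.2,
      hy'v ⟨ht.1.le, ht.2.le.trans hc.1⟩, hxv ht]

theorem stmt_6_general (m : ℕ) (x y : ℝ → ℝ)
    (hx : AntitoneOn x (Set.Icc 0 1)) (hy : AntitoneOn y (Set.Icc 0 1))
    (p : Fin (m + 1) → ℝ) (hp : Monotone p) (hp0 : p 0 = 0) (hpm : p (Fin.last m) = 1)
    (hpiece : ∀ i : Fin m, ∀ s ∈ Set.Ioo (p i.castSucc) (p i.succ),
      ∀ t ∈ Set.Ioo (p i.castSucc) (p i.succ), x s = x t ∧ y s = y t)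
    (hdom : ∀ q ∈ Set.Icc (0:ℝ) 1, ∫ t in (0:ℝ)..q, x t ≤ ∫ t in (0:ℝ)..q, y t)
    (heq1 : ∫ t in (0:ℝ)..1, x t = ∫ t in (0:ℝ)..1, y t) :
    ∃ L : List (ℝ × ℝ), L.length ≤ m ∧
      (∀ p' ∈ L, 0 ≤ p'.1 ∧ p'.1 ≤ p'.2 ∧ p'.2 ≤ 1) ∧
      (L.foldl resample y) =ᵐ[volume.restrict (Set.Icc (0:ℝ) 1)] x :=
  Dominated.exists_resample_list m p x y hp hp0 hpm hx
    (AntitoneOn.intervalIntegrable (by rwa [uIcc_of_le zero_le_one]))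
    (fun i s hs t ht => (hpiece i s hs t ht).1) ⟨hdom, heq1⟩

theorem stmt_6 (m : ℕ) (x y : ℝ → ℝ)
    (hx : AntitoneOn x (Set.Icc 0 1)) (hy : AntitoneOn y (Set.Icc 0 1))
    (hxr : ∀ q ∈ Set.Icc (0:ℝ) 1, x q ∈ Set.Icc (0:ℝ) 1)
    (hyr : ∀ q ∈ Set.Icc (0:ℝ) 1, y q ∈ Set.Icc (0:ℝ) 1)
    (p : Fin (m + 1) → ℝ) (hp : Monotone p) (hp0 : p 0 = 0) (hpm : p (Fin.last m) = 1)
    (hpiece : ∀ i : Fin m, ∀ s ∈ Set.Ioo (p i.castSucc) (p i.succ),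
      ∀ t ∈ Set.Ioo (p i.castSucc) (p i.succ), x s = x t ∧ y s = y t)
    (hdom : ∀ q ∈ Set.Icc (0:ℝ) 1, ∫ t in (0:ℝ)..q, x t ≤ ∫ t in (0:ℝ)..q, y t)
    (heq1 : ∫ t in (0:ℝ)..1, x t = ∫ t in (0:ℝ)..1, y t) :
    ∃ L : List (ℝ × ℝ), L.length ≤ m ∧
      (∀ p' ∈ L, 0 ≤ p'.1 ∧ p'.1 ≤ p'.2 ∧ p'.2 ≤ 1) ∧
      (L.foldl resample y) =ᵐ[volume.restrict (Set.Icc (0:ℝ) 1)] x :=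
  stmt_6_general m x y hx hy p hp hp0 hpm hpiece hdom heq1
end

section
/- Interval resampling preserves dominance and decreases cumulative allocation pointwise: if y : [0,1] → ℝ is non-increasing and y' is obtained from y by averaging y over an interval [a,b] ⊆ [0,1], then y' is non-increasing, ∫₀^q y'(t) dt ≤ ∫₀^q y(t) dt for all q ∈ [0,1], and ∫₀¹ y' = ∫₀¹ y. -/
/-!
On `[a, b]` the averaged function is the constant `c = (∫ y) / (b - a)`, which lies between
`y b` and `y a`, so monotonicity survives at the junctions. Outside `[a, b]` nothing changes,
and the total mass on `[a, b]` is preserved. Inside `[a, b]` the cumulative integral of a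
non-increasing function is concave, so it dominates its chord `q ↦ (q - a) c`, which is the
cumulative integral of the averaged function.
-/

open MeasureTheory intervalIntegral Set

noncomputable def averageOver (y : ℝ → ℝ) (a b : ℝ) (t : ℝ) : ℝ :=
  if t ∈ Icc a b then (∫ s in a..b, y s) / (b - a) else y t

namespace AntitoneOn

variable {f : ℝ → ℝ} {a b l r : ℝ}

theorem intervalIntegrable_of_mem_Icc (hf : AntitoneOn f (Icc l r)) (ha : a ∈ Icc l r)
    (hb : b ∈ Icc l r) : IntervalIntegrable f volume a b :=
  (hf.mono (uIcc_subset_Icc ha hb)).intervalIntegrable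

theorem mul_sub_le_integral (hf : AntitoneOn f (Icc a b)) (hab : a ≤ b) :
    f b * (b - a) ≤ ∫ x in a..b, f x := by
  have hb : b ∈ Icc a b := right_mem_Icc.2 hab
  simpa [mul_comm] using integral_mono_on hab intervalIntegrable_const
    (hf.intervalIntegrable_of_mem_Icc (left_mem_Icc.2 hab) hb) fun x hx => hf hx hb hx.2

theorem integral_le_mul_sub (hf : AntitoneOn f (Icc a b)) (hab : a ≤ b) :
    ∫ x in a..b, f x ≤ f a * (b - a) := by
  have ha : a ∈ Icc a b := left_mem_Icc.2 hab
  simpa [mul_comm] using integral_mono_on hab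
    (hf.intervalIntegrable_of_mem_Icc ha (right_mem_Icc.2 hab)) intervalIntegrable_const
    fun x hx => hf ha hx hx.1

theorem le_integral_div_sub (hf : AntitoneOn f (Icc a b)) (hab : a < b) :
    f b ≤ (∫ x in a..b, f x) / (b - a) :=
  (le_div_iff₀ (sub_pos.2 hab)).2 (hf.mul_sub_le_integral hab.le)

theorem integral_div_sub_le (hf : AntitoneOn f (Icc a b)) (hab : a < b) :
    (∫ x in a..b, f x) / (b - a) ≤ f a :=
  (div_le_iff₀ (sub_pos.2 hab)).2 (hf.integral_le_mul_sub hab.le)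

theorem sub_mul_integral_div_sub_le {q : ℝ} (hf : AntitoneOn f (Icc a b)) (hq : q ∈ Icc a b) :
    (q - a) * ((∫ x in a..b, f x) / (b - a)) ≤ ∫ x in a..q, f x := by
  obtain rfl | haq := hq.1.eq_or_lt
  · simp
  have hleft : f q * (q - a) ≤ ∫ x in a..q, f x :=
    (hf.mono (Icc_subset_Icc_right hq.2)).mul_sub_le_integral hq.1
  have hright : ∫ x in q..b, f x ≤ f q * (b - q) :=
    (hf.mono (Icc_subset_Icc_left hq.1)).integral_le_mul_sub hq.2
  have hsplit : (∫ x in a..q, f x) + ∫ x in q..b, f x = ∫ x in a..b, f x :=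
    integral_add_adjacent_intervals
      (hf.intervalIntegrable_of_mem_Icc (left_mem_Icc.2 (haq.le.trans hq.2)) hq)
      (hf.intervalIntegrable_of_mem_Icc hq (right_mem_Icc.2 (haq.le.trans hq.2)))
  rw [← mul_div_assoc, div_le_iff₀ (by linarith [hq.2]), ← hsplit]
  linarith [mul_le_mul_of_nonneg_left hright (sub_nonneg.2 hq.1),
    mul_le_mul_of_nonneg_left hleft (sub_nonneg.2 hq.2)]

end AntitoneOn

section averageOver

variable {y : ℝ → ℝ} {a b p q : ℝ}

theorem AntitoneOn.averageOver {s : Set ℝ} (hy : AntitoneOn y s) (hab : a < b)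
    (hsub : Icc a b ⊆ s) : AntitoneOn (averageOver y a b) s := by
  have ha : a ∈ s := hsub (left_mem_Icc.2 hab.le)
  have hb : b ∈ s := hsub (right_mem_Icc.2 hab.le)
  intro u hu v hv huv
  simp only [_root_.averageOver]
  split_ifs with hvab huab huab
  · exact le_rfl
  · have hua : u < a := not_le.1 fun hau => huab ⟨hau, huv.trans hvab.2⟩
    exact ((hy.mono hsub).integral_div_sub_le hab).trans (hy hu ha hua.le)
  · have hbv : b < v := not_le.1 fun hvb => hvab ⟨huab.1.trans huv, hvb⟩
    exact (hy hb hv hbv.le).trans ((hy.mono hsub).le_integral_div_sub hab)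
  · exact hy hu hv huv

theorem integral_averageOver_of_le_left (hp : p ≤ a) (hq : q ≤ a) :
    ∫ t in p..q, averageOver y a b t = ∫ t in p..q, y t := by
  refine integral_congr_ae ?_
  filter_upwards [(countable_singleton a).ae_notMem volume] with t hta ht
  have hta' : t < a := lt_of_le_of_ne (ht.2.trans (max_le hp hq)) hta
  simp [averageOver, not_le.2 hta']

theorem integral_averageOver_of_right_le (hp : b ≤ p) (hq : b ≤ q) :
    ∫ t in p..q, averageOver y a b t = ∫ t in p..q, y t := by
  refine integral_congr_ae (Filter.Eventually.of_forall fun t ht => ?_)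
  have hbt : b < t := (le_min hp hq).trans_lt ht.1
  simp [averageOver, not_le.2 hbt]

theorem integral_averageOver_left (hq : q ∈ Icc a b) :
    ∫ t in a..q, averageOver y a b t = (q - a) * ((∫ s in a..b, y s) / (b - a)) := by
  rw [← smul_eq_mul, ← intervalIntegral.integral_const]
  refine integral_congr fun t ht => ?_
  rw [uIcc_of_le hq.1] at ht
  simp [averageOver, ht.1, ht.2.trans hq.2]

theorem integral_averageOver_eq (hy : AntitoneOn y (Icc p q)) (hab : a < b)
    (hsub : Icc a b ⊆ Icc p q) :
    ∫ t in p..q, averageOver y a b t = ∫ t in p..q, y t := by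
  have ha : a ∈ Icc p q := hsub (left_mem_Icc.2 hab.le)
  have hb : b ∈ Icc p q := hsub (right_mem_Icc.2 hab.le)
  have hp : p ∈ Icc p q := left_mem_Icc.2 (ha.1.trans ha.2)
  have hq : q ∈ Icc p q := right_mem_Icc.2 (ha.1.trans ha.2)
  have hy' := hy.averageOver hab hsub
  have hmid : ∫ t in a..b, averageOver y a b t = ∫ t in a..b, y t := by
    rw [integral_averageOver_left (right_mem_Icc.2 hab.le), mul_div_cancel₀ _ (sub_pos.2 hab).ne']
  rw [← integral_add_adjacent_intervals (hy'.intervalIntegrable_of_mem_Icc hp ha)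
      (hy'.intervalIntegrable_of_mem_Icc ha hq),
    ← integral_add_adjacent_intervals (hy'.intervalIntegrable_of_mem_Icc ha hb)
      (hy'.intervalIntegrable_of_mem_Icc hb hq),
    ← integral_add_adjacent_intervals (hy.intervalIntegrable_of_mem_Icc hp ha)
      (hy.intervalIntegrable_of_mem_Icc ha hq),
    ← integral_add_adjacent_intervals (hy.intervalIntegrable_of_mem_Icc ha hb)
      (hy.intervalIntegrable_of_mem_Icc hb hq),
    integral_averageOver_of_le_left ha.1 le_rfl, hmid,
    integral_averageOver_of_right_le le_rfl hb.2]

theorem integral_averageOver_le {r : ℝ} (hy : AntitoneOn y (Icc p r)) (hab : a < b)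
    (hsub : Icc a b ⊆ Icc p r) (hq : q ∈ Icc p r) :
    ∫ t in p..q, averageOver y a b t ≤ ∫ t in p..q, y t := by
  have ha : a ∈ Icc p r := hsub (left_mem_Icc.2 hab.le)
  rcases le_total q a with hqa | haq
  · exact (integral_averageOver_of_le_left ha.1 hqa).le
  rcases le_total b q with hbq | hqb
  · exact (integral_averageOver_eq (hy.mono (Icc_subset_Icc_right hq.2)) hab
      fun t ht => ⟨ha.1.trans ht.1, ht.2.trans hbq⟩).le
  have hp : p ∈ Icc p r := left_mem_Icc.2 (ha.1.trans ha.2)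
  have hy' := hy.averageOver hab hsub
  rw [← integral_add_adjacent_intervals (hy'.intervalIntegrable_of_mem_Icc hp ha)
      (hy'.intervalIntegrable_of_mem_Icc ha hq),
    ← integral_add_adjacent_intervals (hy.intervalIntegrable_of_mem_Icc hp ha)
      (hy.intervalIntegrable_of_mem_Icc ha hq),
    integral_averageOver_of_le_left ha.1 le_rfl, integral_averageOver_left ⟨haq, hqb⟩]
  exact add_le_add_right ((hy.mono hsub).sub_mul_integral_div_sub_le ⟨haq, hqb⟩) _

end averageOver

theorem stmt_7 (y y' : ℝ → ℝ) (a b : ℝ) (hab : a < b)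
    (hsub : Set.Icc a b ⊆ Set.Icc (0:ℝ) 1)
    (hy : AntitoneOn y (Set.Icc 0 1))
    (hy' : ∀ t, y' t = if t ∈ Set.Icc a b then (∫ s in a..b, y s) / (b - a) else y t) :
    AntitoneOn y' (Set.Icc 0 1) ∧
    (∀ q ∈ Set.Icc (0:ℝ) 1, ∫ t in (0:ℝ)..q, y' t ≤ ∫ t in (0:ℝ)..q, y t) ∧
    ∫ t in (0:ℝ)..1, y' t = ∫ t in (0:ℝ)..1, y t := by
  obtain rfl : y' = averageOver y a b := funext hy'
  exact ⟨hy.averageOver hab hsub, fun q hq => integral_averageOver_le hy hab hsub hq,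
    integral_averageOver_eq hy hab hsub⟩
end

section
/- For the single-agent budget problem (value v ∼ F regular with non-decreasing density f, budget B) and q ≤ 1 − F(B): the optimal q-step mechanism offers a single take-it-or-leave-it lottery at price B serving with probability π, purchased exactly by types v ≥ B/π; the parameters satisfy the two equations π = B/v* and v*·q + B·F(v*) = B, where v* = B/π. Consequently, as q increases, v* strictly decreases and π strictly increases. -/
/-!
A feasible allocation rule `x` is best read through its payment rule
`p(v) = v x(v) - ∫₀ᵛ x`, which is capped by the budget `B`. Price the quota constraint
`∫ x f = q` with a multiplier `μ`, chosen so that the net gain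
`G(u) = (1 - F u)(1 - μ/u)` of raising the payment at type `u` is stationary at the cutoff
`t` of the step mechanism. By Fubini, revenue is `∫ x (v f - (1 - F)) = ∫ x W + μ q` with
`W = (v - μ) f - (1 - F)`. Below `t`, monotonicity of `f` and `F` gives `W ≤ -G t`. Above
`t`, `W = -v G' - G`, and a second Fubini turns `∫ₜ x W` into
`∫ₜ (-G') p + G t ∫₀ᵗ x ≤ G t (B + ∫₀ᵗ x)` because `G` decreases there. Summing, revenue is
at most `B G t + μ q = B (1 - F t)`, the revenue of the step mechanism. The cutoff solving
`t q + B F t = B` comes from the intermediate value theorem.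
-/

open MeasureTheory Set

noncomputable def payment (x : ℝ → ℝ) (v : ℝ) : ℝ := v * x v - ∫ u in (0:ℝ)..v, x u

noncomputable def stepAlloc (t c v : ℝ) : ℝ := if t ≤ v then c else 0

def IsFeasible (b B q : ℝ) (f x : ℝ → ℝ) : Prop :=
  MonotoneOn x (Icc 0 b) ∧ (∀ v ∈ Icc 0 b, x v ∈ Icc (0:ℝ) 1) ∧
    (∀ v ∈ Icc 0 b, payment x v ≤ B) ∧ ∫ v in (0:ℝ)..b, x v * f v = q

theorem integral_mul_integral_swap {a b : ℝ} (hab : a ≤ b) {x w : ℝ → ℝ}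
    (hx : IntervalIntegrable x volume a b) (hw : IntervalIntegrable w volume a b) :
    ∫ v in a..b, w v * ∫ u in a..v, x u = ∫ u in a..b, x u * ∫ v in u..b, w v := by
  set ν := volume.restrict (Ioc a b)
  set K : ℝ → ℝ → ℝ := fun v u => if u ≤ v then w v * x u else 0
  have hK : Integrable (Function.uncurry K) (ν.prod ν) := by
    have hKind :
        Function.uncurry K = {p : ℝ × ℝ | p.2 ≤ p.1}.indicator fun p => w p.1 * x p.2 := by
      ext ⟨v, u⟩
      simp [K, indicator]
    rw [hKind]
    exact (hw.1.mul_prod hx.1).indicator (measurableSet_le measurable_snd measurable_fst)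
  have hinner_left : ∀ v ∈ Ioc a b, ∫ u, K v u ∂ν = w v * ∫ u in a..v, x u := by
    intro v hv
    have hKv : K v = (Iic v).indicator fun u => w v * x u := by
      ext u; simp [K, indicator]
    rw [hKv, integral_indicator measurableSet_Iic, Measure.restrict_restrict measurableSet_Iic,
      Iic_inter_Ioc_of_le hv.2, integral_const_mul, intervalIntegral.integral_of_le hv.1.le]
  have hinner_right : ∀ u ∈ Ioc a b, ∫ v, K v u ∂ν = x u * ∫ v in u..b, w v := by
    intro u hu
    have hKu : (fun v => K v u) = (Ici u).indicator fun v => w v * x u := by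
      ext v; simp [K, indicator]
    have hIcc : Ici u ∩ Ioc a b = Icc u b := by
      ext v
      simp only [mem_inter_iff, mem_Ici, mem_Ioc, mem_Icc]
      exact ⟨fun h => ⟨h.1, h.2.2⟩, fun h => ⟨h.1, hu.1.trans_le h.1, h.2⟩⟩
    rw [hKu, integral_indicator measurableSet_Ici, Measure.restrict_restrict measurableSet_Ici,
      hIcc, integral_Icc_eq_integral_Ioc, integral_mul_const,
      intervalIntegral.integral_of_le hu.2, mul_comm]
  rw [intervalIntegral.integral_of_le hab, intervalIntegral.integral_of_le hab,
    ← setIntegral_congr_fun measurableSet_Ioc hinner_left,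
    ← setIntegral_congr_fun measurableSet_Ioc hinner_right]
  exact integral_integral_swap hK

theorem integral_eq_sub_of_hasDerivAt_of_monotoneOn {F f : ℝ → ℝ} {a b u w : ℝ}
    (hFderiv : ∀ v ∈ Icc a b, HasDerivAt F (f v) v) (hfmono : MonotoneOn f (Icc a b))
    (hu : u ∈ Icc a b) (hw : w ∈ Icc a b) : ∫ v in u..w, f v = F w - F u :=
  intervalIntegral.integral_eq_sub_of_hasDerivAt
    (fun v hv => hFderiv v (uIcc_subset_Icc hu hw hv))
    (hfmono.mono (uIcc_subset_Icc hu hw)).intervalIntegrable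

theorem monotoneOn_of_hasDerivAt_nonneg {F f : ℝ → ℝ} {a b : ℝ}
    (hFderiv : ∀ v ∈ Icc a b, HasDerivAt F (f v) v) (hf0 : ∀ v ∈ Icc a b, 0 ≤ f v) :
    MonotoneOn F (Icc a b) :=
  monotoneOn_of_hasDerivWithinAt_nonneg (convex_Icc a b)
    (HasDerivAt.continuousOn hFderiv)
    (fun v hv => (hFderiv v (interior_subset hv)).hasDerivWithinAt)
    (fun v hv => hf0 v (interior_subset hv))

theorem monotone_stepAlloc {c : ℝ} (hc : 0 ≤ c) (t : ℝ) : Monotone (stepAlloc t c) := by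
  intro u v huv
  unfold stepAlloc
  split_ifs <;> linarith

theorem integral_stepAlloc_mul {a b t : ℝ} (hat : a ≤ t) (htb : t ≤ b) (c : ℝ) (g : ℝ → ℝ) :
    ∫ v in a..b, stepAlloc t c v * g v = c * ∫ v in t..b, g v := by
  have hae : ∀ᵐ v, v ∈ uIoc a b →
      stepAlloc t c v * g v = (Ioi t).indicator (fun v => c * g v) v := by
    filter_upwards [measure_eq_zero_iff_ae_notMem.1 (measure_singleton t)] with v hv _
    rcases lt_or_gt_of_ne (show v ≠ t from hv) with hvt | htv
    · simp [stepAlloc, hvt.not_ge, hvt.le]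
    · simp [stepAlloc, htv, htv.le]
  rw [intervalIntegral.integral_congr_ae hae, intervalIntegral.integral_of_le (hat.trans htb),
    setIntegral_indicator measurableSet_Ioi, Ioc_inter_Ioi, max_eq_right hat, integral_const_mul,
    intervalIntegral.integral_of_le htb]

theorem payment_stepAlloc {t v : ℝ} (ht : 0 ≤ t) (hv : 0 ≤ v) (c : ℝ) :
    payment (stepAlloc t c) v = stepAlloc t (c * t) v := by
  by_cases htv : t ≤ v
  · have h := integral_stepAlloc_mul ht htv c fun _ => 1
    simp only [mul_one, intervalIntegral.integral_const, smul_eq_mul] at h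
    rw [payment, h]
    simp only [stepAlloc, if_pos htv]
    ring
  · have h : ∫ u in (0:ℝ)..v, stepAlloc t c u = 0 := by
      refine (intervalIntegral.integral_congr fun u hu => ?_).trans intervalIntegral.integral_zero
      rw [uIcc_of_le hv] at hu
      exact if_neg (by linarith [hu.2])
    rw [payment, h]
    simp [stepAlloc, htv]

theorem isFeasible_stepAlloc {F f : ℝ → ℝ} {b B q t π : ℝ} (ht : 0 ≤ t) (htb : t ≤ b)
    (hπ0 : 0 ≤ π) (hπ1 : π ≤ 1) (hπt : π * t = B) (hq : (1 - F t) * π = q) (hF1 : F b = 1)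
    (hFderiv : ∀ v ∈ Icc 0 b, HasDerivAt F (f v) v) (hfmono : MonotoneOn f (Icc 0 b)) :
    IsFeasible b B q f (stepAlloc t π) := by
  refine ⟨(monotone_stepAlloc hπ0 t).monotoneOn _, fun v _ => ?_, fun v hv => ?_, ?_⟩
  · unfold stepAlloc
    split_ifs
    exacts [⟨hπ0, hπ1⟩, ⟨le_rfl, zero_le_one⟩]
  · rw [payment_stepAlloc ht hv.1, hπt]
    unfold stepAlloc
    split_ifs
    exacts [le_rfl, hπt ▸ mul_nonneg hπ0 ht]
  · rw [integral_stepAlloc_mul ht htb, integral_eq_sub_of_hasDerivAt_of_monotoneOn hFderiv hfmono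
      ⟨ht, htb⟩ ⟨ht.trans htb, le_rfl⟩, hF1, ← hq, mul_comm]

theorem integral_payment_stepAlloc_mul {F f : ℝ → ℝ} {b t : ℝ} (ht : 0 ≤ t) (htb : t ≤ b)
    (c : ℝ) (hF1 : F b = 1) (hFderiv : ∀ v ∈ Icc 0 b, HasDerivAt F (f v) v)
    (hfmono : MonotoneOn f (Icc 0 b)) :
    ∫ v in (0:ℝ)..b, payment (stepAlloc t c) v * f v = c * t * (1 - F t) := by
  rw [intervalIntegral.integral_congr (g := fun v => stepAlloc t (c * t) v * f v),
    integral_stepAlloc_mul ht htb, integral_eq_sub_of_hasDerivAt_of_monotoneOn hFderiv hfmono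
      ⟨ht, htb⟩ ⟨ht.trans htb, le_rfl⟩, hF1]
  intro v hv
  rw [uIcc_of_le (ht.trans htb)] at hv
  simp only [payment_stepAlloc ht hv.1]

theorem integral_payment_mul_eq {F f x : ℝ → ℝ} {b : ℝ} (hb : 0 ≤ b)
    (hFderiv : ∀ v ∈ Icc 0 b, HasDerivAt F (f v) v) (hf : IntervalIntegrable f volume 0 b)
    (hx : IntervalIntegrable x volume 0 b)
    (hxf : IntervalIntegrable (fun v => x v * f v) volume 0 b) :
    ∫ v in (0:ℝ)..b, payment x v * f v = ∫ v in (0:ℝ)..b, x v * (v * f v - (F b - F v)) := by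
  have hF : ContinuousOn F (uIcc 0 b) := uIcc_of_le hb ▸ HasDerivAt.continuousOn hFderiv
  have hvxf : IntervalIntegrable (fun v => v * (x v * f v)) volume 0 b :=
    hxf.continuousOn_mul continuousOn_id
  have hfX : IntervalIntegrable (fun v => f v * ∫ u in (0:ℝ)..v, x u) volume 0 b :=
    hf.mul_continuousOn (intervalIntegral.continuousOn_primitive_interval' hx left_mem_uIcc)
  have hxF : IntervalIntegrable (fun v => x v * (F b - F v)) volume 0 b :=
    hx.mul_continuousOn (continuousOn_const.sub hF)
  have htail : ∀ u ∈ uIcc 0 b, x u * ∫ v in u..b, f v = x u * (F b - F u) := by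
    intro u hu
    rw [uIcc_of_le hb] at hu
    rw [intervalIntegral.integral_eq_sub_of_hasDerivAt
      (fun v hv => hFderiv v (uIcc_subset_Icc hu ⟨hb, le_rfl⟩ hv))
      (hf.mono_set (uIcc_subset_uIcc (by rwa [uIcc_of_le hb]) right_mem_uIcc))]
  calc ∫ v in (0:ℝ)..b, payment x v * f v
      = ∫ v in (0:ℝ)..b, (v * (x v * f v) - f v * ∫ u in (0:ℝ)..v, x u) :=
        intervalIntegral.integral_congr fun v _ => by simp only [payment]; ring
    _ = (∫ v in (0:ℝ)..b, v * (x v * f v)) - ∫ v in (0:ℝ)..b, x v * (F b - F v) := by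
        rw [intervalIntegral.integral_sub hvxf hfX, integral_mul_integral_swap hb hx hf,
          intervalIntegral.integral_congr htail]
    _ = ∫ v in (0:ℝ)..b, x v * (v * f v - (F b - F v)) := by
        rw [← intervalIntegral.integral_sub hvxf hxF]
        exact intervalIntegral.integral_congr fun v _ => by ring

theorem integral_mul_sub_le_of_payment_le {x lam G : ℝ → ℝ} {t b B : ℝ} (ht : 0 ≤ t)
    (htb : t ≤ b) (hG : ∀ v ∈ Icc t b, HasDerivAt G (-lam v) v) (hGb : G b = 0)
    (hlam : IntervalIntegrable lam volume t b) (hlam0 : ∀ v ∈ Icc t b, 0 ≤ lam v)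
    (hx : IntervalIntegrable x volume 0 b)
    (hint : IntervalIntegrable (fun v => x v * (v * lam v - G v)) volume t b)
    (hpay : ∀ v ∈ Icc t b, payment x v ≤ B) :
    ∫ v in t..b, x v * (v * lam v - G v) ≤ (B + ∫ u in (0:ℝ)..t, x u) * G t := by
  have ht_mem : t ∈ uIcc 0 b := by rw [uIcc_of_le (ht.trans htb)]; exact ⟨ht, htb⟩
  have hx0t : IntervalIntegrable x volume 0 t := hx.mono_set (uIcc_subset_uIcc left_mem_uIcc ht_mem)
  have hxtb : IntervalIntegrable x volume t b :=
    hx.mono_set (uIcc_subset_uIcc ht_mem right_mem_uIcc)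
  have hGc : ContinuousOn G (uIcc t b) := uIcc_of_le htb ▸ HasDerivAt.continuousOn hG
  have hlam_tail : ∀ u ∈ Icc t b, ∫ v in u..b, lam v = G u := by
    intro u hu
    have := intervalIntegral.integral_eq_sub_of_hasDerivAt
      (fun v hv => hG v (uIcc_subset_Icc hu ⟨htb, le_rfl⟩ hv))
      (hlam.neg.mono_set (uIcc_subset_uIcc (by rwa [uIcc_of_le htb]) right_mem_uIcc))
    rw [intervalIntegral.integral_neg, hGb] at this
    linarith
  set X₀ := ∫ u in (0:ℝ)..t, x u
  have hxG : IntervalIntegrable (fun v => x v * G v) volume t b := hxtb.mul_continuousOn hGc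
  have hlamX : IntervalIntegrable (fun v => lam v * ∫ u in t..v, x u) volume t b :=
    hlam.mul_continuousOn (intervalIntegral.continuousOn_primitive_interval' hxtb left_mem_uIcc)
  have hswap : ∫ v in t..b, lam v * (∫ u in t..v, x u) = ∫ v in t..b, x v * G v := by
    rw [integral_mul_integral_swap htb hxtb hlam]
    exact intervalIntegral.integral_congr fun u hu => by
      rw [hlam_tail u (by rwa [uIcc_of_le htb] at hu)]
  have hpay_eq : ∀ v ∈ uIcc t b, lam v * payment x v =
      x v * (v * lam v - G v) + x v * G v - lam v * (∫ u in t..v, x u) - X₀ * lam v := by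
    intro v hv
    rw [payment, ← intervalIntegral.integral_add_adjacent_intervals hx0t
      (hxtb.mono_set (uIcc_subset_uIcc left_mem_uIcc hv))]
    ring
  have hlam_pay : ∫ v in t..b, lam v * payment x v ≤ B * G t := by
    rw [intervalIntegral.integral_congr hpay_eq, ← hlam_tail t ⟨le_rfl, htb⟩,
      ← intervalIntegral.integral_const_mul]
    refine intervalIntegral.integral_mono_on htb (((hint.add hxG).sub hlamX).sub
      (hlam.const_mul X₀)) (hlam.const_mul B) fun v hv => ?_
    rw [← hpay_eq v (by rwa [uIcc_of_le htb]), mul_comm B]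
    exact mul_le_mul_of_nonneg_left (hpay v hv) (hlam0 v hv)
  have hsplit : ∫ v in t..b, lam v * payment x v =
      (∫ v in t..b, x v * (v * lam v - G v)) - X₀ * G t := by
    rw [intervalIntegral.integral_congr hpay_eq, intervalIntegral.integral_sub
      ((hint.add hxG).sub hlamX) (hlam.const_mul X₀), intervalIntegral.integral_sub
      (hint.add hxG) hlamX, intervalIntegral.integral_add hint hxG, hswap,
      intervalIntegral.integral_const_mul, hlam_tail t ⟨le_rfl, htb⟩]
    ring
  linarith

-- Lagrangian value of raising the payment of all types above `u` by one unit: revenue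
-- `1 - F u`, minus the quota `(1 - F u) / u` it uses up, priced at `μ`.
noncomputable def netGain (F : ℝ → ℝ) (μ u : ℝ) : ℝ := (1 - F u) * (1 - μ / u)

noncomputable def netGainRate (F f : ℝ → ℝ) (μ v : ℝ) : ℝ :=
  f v * (1 - μ / v) - (1 - F v) * μ / v ^ 2

-- `f v * (φ v - μ)` for the virtual value `φ v = v - (1 - F v) / f v`.
noncomputable def virtualSurplus (F f : ℝ → ℝ) (μ v : ℝ) : ℝ := (v - μ) * f v - (1 - F v)

theorem hasDerivAt_netGain {F f : ℝ → ℝ} {μ v : ℝ} (hv : v ≠ 0) (hF : HasDerivAt F (f v) v) :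
    HasDerivAt (netGain F μ) (-netGainRate F f μ v) v := by
  refine (((hasDerivAt_const v (1:ℝ)).sub hF).mul ((hasDerivAt_const v (1:ℝ)).sub
    ((hasDerivAt_const v μ).div (hasDerivAt_id' v) hv))).congr_deriv ?_
  simp only [netGainRate, Pi.sub_apply, Pi.div_apply]
  field_simp
  ring

theorem mul_netGainRate_sub_netGain {F f : ℝ → ℝ} {μ v : ℝ} (hv : v ≠ 0) :
    v * netGainRate F f μ v - netGain F μ v = virtualSurplus F f μ v := by
  simp only [netGainRate, netGain, virtualSurplus]
  field_simp
  ring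

theorem intervalIntegrable_netGainRate {F f : ℝ → ℝ} {t b : ℝ} (μ : ℝ) (ht : 0 < t)
    (htb : t ≤ b) (hF : ContinuousOn F (uIcc t b)) (hf : IntervalIntegrable f volume t b) :
    IntervalIntegrable (netGainRate F f μ) volume t b := by
  have hv0 : ∀ v ∈ uIcc t b, v ≠ 0 := fun v hv =>
    (ht.trans_le (by rw [uIcc_of_le htb] at hv; exact hv.1)).ne'
  exact (hf.mul_continuousOn
    (continuousOn_const.sub (continuousOn_const.div continuousOn_id hv0))).sub
    (((continuousOn_const.sub hF).mul continuousOn_const).div (continuousOn_pow 2)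
      fun v hv => pow_ne_zero 2 (hv0 v hv)).intervalIntegrable

theorem intervalIntegrable_mul_virtualSurplus {F f x : ℝ → ℝ} {a b : ℝ} (μ : ℝ)
    (hF : ContinuousOn F (uIcc a b)) (hx : IntervalIntegrable x volume a b)
    (hxf : IntervalIntegrable (fun v => x v * f v) volume a b) :
    IntervalIntegrable (fun v => x v * virtualSurplus F f μ v) volume a b :=
  ((hxf.mul_continuousOn (g := fun v => v - μ) (continuousOn_id.sub continuousOn_const)).sub
    (hx.mul_continuousOn (g := fun v => 1 - F v) (continuousOn_const.sub hF))).congr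
    fun v _ => by simp only [virtualSurplus]; ring

-- `μ` makes `t` a critical point of `netGain F μ`: with `a = f t` and `s = 1 - F t`, the
-- equation says `netGainRate F f μ t = 0`.
theorem exists_multiplier {t a s : ℝ} (ht : 0 < t) (ha : 0 ≤ a) (hs : 0 ≤ s) :
    ∃ μ, 0 ≤ μ ∧ μ ≤ t ∧ t * a * (t - μ) = μ * s := by
  rcases (add_nonneg (mul_nonneg ht.le ha) hs).eq_or_lt' with hden | hden
  · have hta : t * a = 0 := by linarith [mul_nonneg ht.le ha]
    exact ⟨0, le_rfl, ht.le, by rw [hta]; ring⟩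
  · refine ⟨t ^ 2 * a / (t * a + s), by positivity, ?_, ?_⟩
    · rw [div_le_iff₀ hden]
      nlinarith
    · field_simp
      ring

theorem virtualSurplus_le_neg_netGain {F f : ℝ → ℝ} {b t μ v : ℝ} (ht : 0 < t) (htb : t ≤ b)
    (hμt : μ ≤ t) (hμ : t * f t * (t - μ) = μ * (1 - F t)) (hFmono : MonotoneOn F (Icc 0 b))
    (hfmono : MonotoneOn f (Icc 0 b)) (hf0 : ∀ v ∈ Icc 0 b, 0 ≤ f v) (hv : v ∈ Icc 0 t) :
    virtualSurplus F f μ v ≤ -netGain F μ t := by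
  have htb' : t ∈ Icc 0 b := ⟨ht.le, htb⟩
  have hvb : v ∈ Icc 0 b := ⟨hv.1, hv.2.trans htb⟩
  have hFv : F v ≤ F t := hFmono hvb htb' hv.2
  have hgain : netGain F μ t = (1 - F t) - (t - μ) * f t := by
    simp only [netGain]
    field_simp
    linarith
  simp only [virtualSurplus]
  rcases le_or_gt v μ with hvμ | hμv
  · have h1 : (v - μ) * f v ≤ 0 := mul_nonpos_of_nonpos_of_nonneg (by linarith) (hf0 v hvb)
    have h2 : 0 ≤ (t - μ) * f t := mul_nonneg (by linarith) (hf0 t htb')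
    linarith
  · have h1 : (v - μ) * f v ≤ (t - μ) * f t :=
      mul_le_mul (by linarith [hv.2]) (hfmono hvb htb' hv.2) (hf0 v hvb) (by linarith)
    linarith

theorem netGainRate_nonneg {F f : ℝ → ℝ} {b t μ v : ℝ} (ht : 0 < t) (hμ0 : 0 ≤ μ) (hμt : μ ≤ t)
    (hμ : t * f t * (t - μ) = μ * (1 - F t)) (hFmono : MonotoneOn F (Icc 0 b))
    (hfmono : MonotoneOn f (Icc 0 b)) (hf0 : ∀ v ∈ Icc 0 b, 0 ≤ f v) (hv : v ∈ Icc t b) :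
    0 ≤ netGainRate F f μ v := by
  have htb' : t ∈ Icc 0 b := ⟨ht.le, hv.1.trans hv.2⟩
  have hvb : v ∈ Icc 0 b := ⟨ht.le.trans hv.1, hv.2⟩
  have hv0 : 0 < v := ht.trans_le hv.1
  have hrate : netGainRate F f μ v = (v * f v * (v - μ) - μ * (1 - F v)) / v ^ 2 := by
    simp only [netGainRate]
    field_simp
  have h1 : t * f t * (t - μ) ≤ v * f v * (v - μ) :=
    mul_le_mul (mul_le_mul hv.1 (hfmono htb' hvb hv.1) (hf0 t htb') hv0.le)
      (by linarith [hv.1]) (by linarith) (mul_nonneg hv0.le (hf0 v hvb))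
  have h2 : μ * (1 - F v) ≤ μ * (1 - F t) :=
    mul_le_mul_of_nonneg_left (by linarith [hFmono htb' hvb hv.1]) hμ0
  rw [hrate]
  exact div_nonneg (by linarith) (by positivity)

theorem integral_mul_virtualSurplus_le {F f x : ℝ → ℝ} {b B t μ : ℝ} (ht : 0 < t) (htb : t ≤ b)
    (hF1 : F b = 1) (hFderiv : ∀ v ∈ Icc 0 b, HasDerivAt F (f v) v)
    (hf0 : ∀ v ∈ Icc 0 b, 0 ≤ f v) (hfmono : MonotoneOn f (Icc 0 b)) (hμ0 : 0 ≤ μ)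
    (hμt : μ ≤ t) (hμ : t * f t * (t - μ) = μ * (1 - F t)) (hx : IntervalIntegrable x volume 0 b)
    (hxW : IntervalIntegrable (fun v => x v * virtualSurplus F f μ v) volume t b)
    (hpay : ∀ v ∈ Icc t b, payment x v ≤ B) :
    ∫ v in t..b, x v * virtualSurplus F f μ v ≤ (B + ∫ v in (0:ℝ)..t, x v) * netGain F μ t := by
  have hsub : Icc t b ⊆ Icc 0 b := Icc_subset_Icc_left ht.le
  have hW : EqOn (fun v => x v * virtualSurplus F f μ v)
      (fun v => x v * (v * netGainRate F f μ v - netGain F μ v)) (uIcc t b) := fun v hv => by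
    rw [uIcc_of_le htb] at hv
    simp only [mul_netGainRate_sub_netGain (ht.trans_le hv.1).ne']
  rw [intervalIntegral.integral_congr hW]
  refine integral_mul_sub_le_of_payment_le ht.le htb
    (fun v hv => hasDerivAt_netGain (ht.trans_le hv.1).ne' (hFderiv v (hsub hv)))
    (by simp [netGain, hF1]) ?_
    (fun v hv => netGainRate_nonneg ht hμ0 hμt hμ
      (monotoneOn_of_hasDerivAt_nonneg hFderiv hf0) hfmono hf0 hv)
    hx (hxW.congr (hW.mono uIoc_subset_uIcc)) hpay
  rw [← uIcc_of_le htb] at hsub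
  exact intervalIntegrable_netGainRate μ ht htb
    ((HasDerivAt.continuousOn hFderiv).mono hsub) (hfmono.mono hsub).intervalIntegrable

theorem integral_payment_mul_le {F f x : ℝ → ℝ} {b B q t : ℝ} (ht : 0 < t) (htb : t ≤ b)
    (hF1 : F b = 1) (hFderiv : ∀ v ∈ Icc 0 b, HasDerivAt F (f v) v)
    (hf0 : ∀ v ∈ Icc 0 b, 0 ≤ f v) (hfmono : MonotoneOn f (Icc 0 b))
    (hcut : t * q = B * (1 - F t)) (hx : IsFeasible b B q f x) :
    ∫ v in (0:ℝ)..b, payment x v * f v ≤ B * (1 - F t) := by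
  obtain ⟨hxmono, hx01, hpay, hquota⟩ := hx
  have hb : 0 ≤ b := ht.le.trans htb
  have htb' : t ∈ Icc 0 b := ⟨ht.le, htb⟩
  have hFmono := monotoneOn_of_hasDerivAt_nonneg hFderiv hf0
  obtain ⟨μ, hμ0, hμt, hμ⟩ := exists_multiplier ht (hf0 t htb')
    (sub_nonneg.2 (hF1 ▸ hFmono htb' ⟨hb, le_rfl⟩ htb))
  have hx0 : ∀ v ∈ Icc 0 b, 0 ≤ x v := fun v hv => (hx01 v hv).1
  have hf : IntervalIntegrable f volume 0 b := (uIcc_of_le hb ▸ hfmono).intervalIntegrable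
  have hx : IntervalIntegrable x volume 0 b := (uIcc_of_le hb ▸ hxmono).intervalIntegrable
  have hxf : IntervalIntegrable (fun v => x v * f v) volume 0 b :=
    (uIcc_of_le hb ▸ hxmono.mul hfmono hx0 hf0).intervalIntegrable
  have hxW := intervalIntegrable_mul_virtualSurplus μ
    (uIcc_of_le hb ▸ HasDerivAt.continuousOn hFderiv) hx hxf
  have ht_mem : t ∈ uIcc 0 b := by rwa [uIcc_of_le hb]
  have hrev : ∫ v in (0:ℝ)..b, payment x v * f v = (∫ v in (0:ℝ)..t, x v * virtualSurplus F f μ v)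
      + (∫ v in t..b, x v * virtualSurplus F f μ v) + μ * q := by
    rw [integral_payment_mul_eq hb hFderiv hf hx hxf, hF1,
      intervalIntegral.integral_add_adjacent_intervals
        (hxW.mono_set (uIcc_subset_uIcc left_mem_uIcc ht_mem))
        (hxW.mono_set (uIcc_subset_uIcc ht_mem right_mem_uIcc)),
      ← hquota, ← intervalIntegral.integral_const_mul,
      ← intervalIntegral.integral_add hxW (hxf.const_mul μ)]
    exact intervalIntegral.integral_congr fun v _ => by simp only [virtualSurplus]; ring
  have hlow : ∫ v in (0:ℝ)..t, x v * virtualSurplus F f μ v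
      ≤ (∫ v in (0:ℝ)..t, x v) * -netGain F μ t := by
    rw [← intervalIntegral.integral_mul_const]
    refine intervalIntegral.integral_mono_on ht.le
      (hxW.mono_set (uIcc_subset_uIcc left_mem_uIcc ht_mem))
      ((hx.mono_set (uIcc_subset_uIcc left_mem_uIcc ht_mem)).mul_const _) fun v hv => ?_
    exact mul_le_mul_of_nonneg_left
      (virtualSurplus_le_neg_netGain ht htb hμt hμ hFmono hfmono hf0 hv)
      (hx0 v ⟨hv.1, hv.2.trans htb⟩)
  have hhigh := integral_mul_virtualSurplus_le ht htb hF1 hFderiv hf0 hfmono hμ0 hμt hμ hx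
    (hxW.mono_set (uIcc_subset_uIcc ht_mem right_mem_uIcc))
    fun v hv => hpay v ⟨ht.le.trans hv.1, hv.2⟩
  have hB : B * netGain F μ t + μ * q = B * (1 - F t) := by
    simp only [netGain]
    field_simp
    linear_combination μ * hcut
  rw [hrev]
  linarith

theorem exists_cutoff {F : ℝ → ℝ} {b B q : ℝ} (hB : 0 ≤ B) (hBb : B ≤ b) (hq : 0 ≤ q)
    (hqB : q ≤ 1 - F B) (hF1 : F b = 1) (hF : ContinuousOn F (Icc B b)) :
    ∃ t ∈ Icc B b, t * q + B * F t = B := by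
  have hg : ContinuousOn (fun v => v * q + B * F v) (Icc B b) :=
    (continuousOn_id.mul continuousOn_const).add (continuousOn_const.mul hF)
  refine intermediate_value_Icc hBb hg ⟨?_, ?_⟩
  · show B * q + B * F B ≤ B
    nlinarith
  · show B ≤ b * q + B * F b
    rw [hF1]
    nlinarith

theorem cutoff_eq_of_lottery {F : ℝ → ℝ} {B q t π : ℝ} (hπ : π * t = B)
    (hπq : (1 - F t) * π = q) : t * q + B * F t = B := by
  rw [← hπq, ← hπ]
  ring

theorem cutoff_lt_and_prob_lt_of_lt {F : ℝ → ℝ} {b B q q' t t' π π' : ℝ}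
    (hFmono : MonotoneOn F (Icc 0 b)) (hB : 0 < B) (hq : 0 ≤ q) (hqq' : q < q')
    (ht : t ∈ Icc 0 b) (ht' : t' ∈ Icc 0 b) (hπ : π * t = B) (hπq : (1 - F t) * π = q)
    (hπ' : π' * t' = B) (hπq' : (1 - F t') * π' = q') :
    t' < t ∧ π < π' := by
  have ht'0 : 0 < t' := ht'.1.lt_of_ne (by rintro rfl; linarith [mul_zero π'])
  have hπ0 : 0 < π := pos_of_mul_pos_left (hπ ▸ hB) ht.1
  have ht'_lt : t' < t := by
    by_contra! htt'
    nlinarith [mul_le_mul_of_nonneg_right htt' hq, mul_lt_mul_of_pos_left hqq' ht'0,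
      mul_le_mul_of_nonneg_left (hFmono ht ht' htt') hB.le, cutoff_eq_of_lottery hπ hπq,
      cutoff_eq_of_lottery hπ' hπq']
  exact ⟨ht'_lt, by nlinarith [mul_lt_mul_of_pos_left ht'_lt hπ0]⟩

theorem stmt_12_general (vbar B : ℝ) (F f : ℝ → ℝ)
    (hvbar : B < vbar) (hB : 0 < B)
    (hF1 : F vbar = 1)
    (hFderiv : ∀ v ∈ Set.Icc 0 vbar, HasDerivAt F (f v) v)
    (hfpos : ∀ v ∈ Set.Icc 0 vbar, 0 < f v)
    (hfmono : MonotoneOn f (Set.Icc 0 vbar))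
    (q : ℝ) (hq : 0 < q) (hqB : q ≤ 1 - F B) :
    ∃ vstar pi : ℝ, B ≤ vstar ∧ vstar ≤ vbar ∧ 0 < pi ∧ pi ≤ 1 ∧
      pi * vstar = B ∧ (1 - F vstar) * pi = q ∧ vstar * q + B * F vstar = B ∧
      -- the take-it-or-leave-it lottery at price B serving with probability pi,
      -- bought exactly by types v ≥ vstar = B / pi, is a feasible q-step mechanism
      -- and is revenue optimal among all feasible (monotone, IC/IR payment,
      -- budget-respecting, ex ante probability q) allocation rules:
      ((MonotoneOn (fun v => if vstar ≤ v then pi else 0) (Set.Icc 0 vbar) ∧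
        (∀ v ∈ Set.Icc 0 vbar, (if vstar ≤ v then pi else 0) ∈ Set.Icc (0:ℝ) 1) ∧
        (∀ v ∈ Set.Icc 0 vbar,
          v * (if vstar ≤ v then pi else 0)
            - (∫ u in (0:ℝ)..v, (if vstar ≤ u then pi else 0)) ≤ B) ∧
        (∫ v in (0:ℝ)..vbar, (if vstar ≤ v then pi else 0) * f v) = q) ∧
       (∀ x : ℝ → ℝ, MonotoneOn x (Set.Icc 0 vbar) →
         (∀ v ∈ Set.Icc 0 vbar, x v ∈ Set.Icc (0:ℝ) 1) →
         (∀ v ∈ Set.Icc 0 vbar, v * x v - (∫ u in (0:ℝ)..v, x u) ≤ B) →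
         (∫ v in (0:ℝ)..vbar, x v * f v) = q →
         (∫ v in (0:ℝ)..vbar, (v * x v - ∫ u in (0:ℝ)..v, x u) * f v)
           ≤ ∫ v in (0:ℝ)..vbar,
               (v * (if vstar ≤ v then pi else 0)
                 - ∫ u in (0:ℝ)..v, (if vstar ≤ u then pi else 0)) * f v)) ∧
      -- as q increases, vstar strictly decreases and pi strictly increases:
      (∀ q' vstar' pi', q < q' → q' ≤ 1 - F B →
        0 < pi' → pi' * vstar' = B → (1 - F vstar') * pi' = q' →
        B ≤ vstar' → vstar' ≤ vbar →
        vstar' < vstar ∧ pi < pi') := by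
  have hf0 : ∀ v ∈ Icc 0 vbar, 0 ≤ f v := fun v hv => (hfpos v hv).le
  obtain ⟨t, ⟨hBt, htv⟩, hcut⟩ := exists_cutoff hB.le hvbar.le hq.le hqB hF1
    ((HasDerivAt.continuousOn hFderiv).mono (Icc_subset_Icc_left hB.le))
  have ht : 0 < t := hB.trans_le hBt
  have hπ0 : 0 < B / t := div_pos hB ht
  have hπ1 : B / t ≤ 1 := (div_le_one ht).2 hBt
  have hπt : B / t * t = B := div_mul_cancel₀ B ht.ne'
  have hπq : (1 - F t) * (B / t) = q := by
    field_simp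
    linarith
  refine ⟨t, B / t, hBt, htv, hπ0, hπ1, hπt, hπq, hcut,
    ⟨isFeasible_stepAlloc ht.le htv hπ0.le hπ1 hπt hπq hF1 hFderiv hfmono,
      fun x hxmono hx01 hpay hquota => ?_⟩,
    fun q' t' π' hqq' _ _ hπt' hπq' hBt' ht'v => ?_⟩
  · calc _ ≤ B * (1 - F t) := integral_payment_mul_le ht htv hF1 hFderiv hf0 hfmono
          (by linarith) ⟨hxmono, hx01, hpay, hquota⟩
      _ = B / t * t * (1 - F t) := by rw [hπt]
      _ = _ := (integral_payment_stepAlloc_mul ht.le htv _ hF1 hFderiv hfmono).symm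
  · exact cutoff_lt_and_prob_lt_of_lt (monotoneOn_of_hasDerivAt_nonneg hFderiv hf0) hB hq.le hqq'
      ⟨ht.le, htv⟩ ⟨hB.le.trans hBt', ht'v⟩ hπt hπq hπt' hπq'

theorem stmt_12 (vbar B : ℝ) (F f : ℝ → ℝ)
    (hvbar : B < vbar) (hB : 0 < B)
    (hF0 : F 0 = 0) (hF1 : F vbar = 1)
    (hFderiv : ∀ v ∈ Set.Icc 0 vbar, HasDerivAt F (f v) v)
    (hfpos : ∀ v ∈ Set.Icc 0 vbar, 0 < f v)
    (hfmono : MonotoneOn f (Set.Icc 0 vbar))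
    (hreg : MonotoneOn (fun v => v - (1 - F v) / f v) (Set.Icc 0 vbar))
    (q : ℝ) (hq : 0 < q) (hqB : q ≤ 1 - F B) :
    ∃ vstar pi : ℝ, B ≤ vstar ∧ vstar ≤ vbar ∧ 0 < pi ∧ pi ≤ 1 ∧
      pi * vstar = B ∧ (1 - F vstar) * pi = q ∧ vstar * q + B * F vstar = B ∧
      -- the take-it-or-leave-it lottery at price B serving with probability pi,
      -- bought exactly by types v ≥ vstar = B / pi, is a feasible q-step mechanism
      -- and is revenue optimal among all feasible (monotone, IC/IR payment,
      -- budget-respecting, ex ante probability q) allocation rules: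
      ((MonotoneOn (fun v => if vstar ≤ v then pi else 0) (Set.Icc 0 vbar) ∧
        (∀ v ∈ Set.Icc 0 vbar, (if vstar ≤ v then pi else 0) ∈ Set.Icc (0:ℝ) 1) ∧
        (∀ v ∈ Set.Icc 0 vbar,
          v * (if vstar ≤ v then pi else 0)
            - (∫ u in (0:ℝ)..v, (if vstar ≤ u then pi else 0)) ≤ B) ∧
        (∫ v in (0:ℝ)..vbar, (if vstar ≤ v then pi else 0) * f v) = q) ∧
       (∀ x : ℝ → ℝ, MonotoneOn x (Set.Icc 0 vbar) →
         (∀ v ∈ Set.Icc 0 vbar, x v ∈ Set.Icc (0:ℝ) 1) →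
         (∀ v ∈ Set.Icc 0 vbar, v * x v - (∫ u in (0:ℝ)..v, x u) ≤ B) →
         (∫ v in (0:ℝ)..vbar, x v * f v) = q →
         (∫ v in (0:ℝ)..vbar, (v * x v - ∫ u in (0:ℝ)..v, x u) * f v)
           ≤ ∫ v in (0:ℝ)..vbar,
               (v * (if vstar ≤ v then pi else 0)
                 - ∫ u in (0:ℝ)..v, (if vstar ≤ u then pi else 0)) * f v)) ∧
      -- as q increases, vstar strictly decreases and pi strictly increases:
      (∀ q' vstar' pi', q < q' → q' ≤ 1 - F B →
        0 < pi' → pi' * vstar' = B → (1 - F vstar') * pi' = q' →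
        B ≤ vstar' → vstar' ≤ vbar →
        vstar' < vstar ∧ pi < pi') :=
  stmt_12_general vbar B F f hvbar hB hF1 hFderiv hfpos hfmono q hq hqB
end
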